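/- For all u₁, u₂, v₁, v₂ ∈ 𝕍, the pair (u₁,u₂) is lexicographically smaller than (v₁,v₂) (i.e., u₁ < v₁, or u₁ = v₁ and u₂ < v₂) if and only if (u₁ ≫ u₂) < (v₁ ≫ v₂), where < on 𝕍 is the lexicographic order on lists induced by F < 0 < T. -/

import Mathlib

/-- The three truth symbols F, 0 (Z), T. -/
inductive TSym : Type
  | F | Z | T
deriving DecidableEq

open TSym

/-- The operation u ≫ v on lists of symbols. -/
def lexOp (u v : List TSym) : List TSym :=
  if u = [F] ∧ v = [F] then [F]
  else if u = [T] ∧ v = [T] then [T]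
  else Z :: (u ++ v)

/-- The truth domain 𝕍 as an inductive predicate. -/
inductive Vmem : List TSym → Prop
  | F : Vmem [F]
  | T : Vmem [T]
  | op {u v : List TSym} : Vmem u → Vmem v → Vmem (lexOp u v)

def symRank : TSym → ℕ
  | F => 0 | Z => 1 | T => 2

/-- The order F < 0 < T on symbols. -/
def symLt (a b : TSym) : Prop := symRank a < symRank b

/-- Lexicographic order on lists induced by F < 0 < T. -/
def listLt (u v : List TSym) : Prop := List.Lex symLt u v

/-- Pointwise negation F ↦ T, T ↦ F, 0 ↦ 0. -/
def symNeg : TSym → TSym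
  | F => T | T => F | Z => Z

def negList (v : List TSym) : List TSym := v.map symNeg

def symVal : TSym → ℚ
  | F => -1 | Z => 0 | T => 1

/-- val([u₁,…,u_n]) = Σ symVal(u_i) · (1/3)^(i-1). -/
def val : List TSym → ℚ
  | [] => 0
  | a :: t => symVal a + val t / 3

open Classical in
/-- Lexicographic minimum. -/
noncomputable def minL (u v : List TSym) : List TSym := if listLt u v then u else v

open Classical in
/-- Lexicographic maximum. -/
noncomputable def maxL (u v : List TSym) : List TSym := if listLt u v then v else u

/-!
The words of 𝕍 form a prefix-free code: a word of 𝕍 starting with F or T is that single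
symbol, and one starting with 0 is followed by two words of 𝕍, each read off uniquely by
induction. Hence on 𝕍 the lexicographic order of pairs (u₁, u₂) agrees with the order of the
concatenations u₁ ++ u₂. Except for [F] ≫ [F] = [F], the least element of 𝕍, and
[T] ≫ [T] = [T], the greatest, u ≫ v is 0 :: (u ++ v); so ≫ is strictly monotone, and a strictly
monotone map out of a total order reflects the order.
-/

instance : Std.Trichotomous symLt where
  trichotomous a b := by cases a <;> cases b <;> simp [symLt, symRank]

instance : Std.Asymm symLt where
  asymm a b := by cases a <;> cases b <;> simp [symLt, symRank]

theorem listLt_asymm {u v : List TSym} (h : listLt u v) : ¬ listLt v u :=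
  asymm (r := List.Lex symLt) h

theorem listLt_irrefl (u : List TSym) : ¬ listLt u u := fun h => listLt_asymm h h

theorem List.Lex.append_of_not_prefix {α : Type*} {r : α → α → Prop} {s t : List α}
    (h : List.Lex r s t) (hst : ¬ s <+: t) (u v : List α) : List.Lex r (s ++ u) (t ++ v) := by
  induction h with
  | nil => exact absurd List.nil_prefix hst
  | cons _ ih => exact .cons (ih fun hp => hst (List.prefix_cons_inj _ |>.mpr hp))
  | rel h => exact .rel h

theorem lexOp_of_not {u v : List TSym} (hF : ¬ (u = [F] ∧ v = [F]))
    (hT : ¬ (u = [T] ∧ v = [T])) : lexOp u v = Z :: (u ++ v) := by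
  rw [lexOp, if_neg hF, if_neg hT]

theorem lexOp_F_F : lexOp [F] [F] = [F] := by simp [lexOp]

theorem lexOp_T_T : lexOp [T] [T] = [T] := by simp [lexOp]

-- In the namespace `Vmem`, plain `F` and `T` would resolve to the constructors of `Vmem`.
theorem Vmem.eq_or_eq_or_exists {v : List TSym} (hv : Vmem v) :
    v = [TSym.F] ∨ v = [TSym.T] ∨ ∃ c d, Vmem c ∧ Vmem d ∧ v = TSym.Z :: (c ++ d) := by
  rcases hv with _ | _ | @⟨c, d, hc, hd⟩
  · exact .inl rfl
  · exact .inr (.inl rfl)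
  · unfold lexOp
    split_ifs
    · exact .inl rfl
    · exact .inr (.inl rfl)
    · exact .inr (.inr ⟨c, d, hc, hd, rfl⟩)

theorem Vmem.eq_singleton_of_append_eq {x : TSym} (hx : x ≠ TSym.Z) {v s t : List TSym}
    (hv : Vmem v) (h : [x] ++ s = v ++ t) : v = [x] := by
  rcases hv.eq_or_eq_or_exists with rfl | rfl | ⟨c, d, -, -, rfl⟩ <;> cases x <;> simp_all

theorem Vmem.eq_of_append_eq {u v s t : List TSym} (hu : Vmem u) (hv : Vmem v)
    (h : u ++ s = v ++ t) : u = v := by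
  induction hu generalizing v s t with
  | F => exact (hv.eq_singleton_of_append_eq (by decide) h).symm
  | T => exact (hv.eq_singleton_of_append_eq (by decide) h).symm
  | @op a b _ _ iha ihb =>
    unfold lexOp at h ⊢
    split_ifs at h ⊢
    · exact (hv.eq_singleton_of_append_eq (by decide) h).symm
    · exact (hv.eq_singleton_of_append_eq (by decide) h).symm
    rcases hv.eq_or_eq_or_exists with rfl | rfl | ⟨c, d, hc, hd, rfl⟩
    iterate 2 simp at h
    simp only [List.cons_append, List.cons.injEq, true_and, List.append_assoc] at h
    obtain rfl := iha hc h
    rw [ihb hd (List.append_cancel_left h)]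

theorem Vmem.eq_of_prefix {u v : List TSym} (hu : Vmem u) (hv : Vmem v) (h : u <+: v) :
    u = v := by
  obtain ⟨t, rfl⟩ := h
  exact hu.eq_of_append_eq hv (List.append_nil _).symm

theorem Vmem.not_listLt_F {v : List TSym} (hv : Vmem v) : ¬ listLt v [TSym.F] := by
  rcases hv.eq_or_eq_or_exists with rfl | rfl | ⟨c, d, -, -, rfl⟩ <;>
    simp [listLt, List.cons_lex_cons_iff, symLt, symRank]

theorem Vmem.not_T_listLt {v : List TSym} (hv : Vmem v) : ¬ listLt [TSym.T] v := by
  rcases hv.eq_or_eq_or_exists with rfl | rfl | ⟨c, d, -, -, rfl⟩ <;>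
    simp [listLt, List.cons_lex_cons_iff, symLt, symRank]

theorem listLt_F_lexOp {v₁ v₂ : List TSym} (h : ¬ (v₁ = [F] ∧ v₂ = [F])) :
    listLt [F] (lexOp v₁ v₂) := by
  unfold lexOp
  split_ifs <;> exact .rel (by simp [symLt, symRank])

theorem listLt_lexOp_T {u₁ u₂ : List TSym} (h : ¬ (u₁ = [T] ∧ u₂ = [T])) :
    listLt (lexOp u₁ u₂) [T] := by
  unfold lexOp
  split_ifs <;> exact .rel (by simp [symLt, symRank])

theorem listLt_append_append {u₁ u₂ v₁ v₂ : List TSym} (h₁ : Vmem u₁) (h₃ : Vmem v₁)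
    (h : listLt u₁ v₁ ∨ (u₁ = v₁ ∧ listLt u₂ v₂)) : listLt (u₁ ++ u₂) (v₁ ++ v₂) := by
  rcases h with h | ⟨rfl, h⟩
  · exact h.append_of_not_prefix (fun hp => listLt_irrefl _ (h₁.eq_of_prefix h₃ hp ▸ h)) _ _
  · exact List.Lex.append_left _ h _

theorem listLt_lexOp_of_lex {u₁ u₂ v₁ v₂ : List TSym}
    (h₁ : Vmem u₁) (h₂ : Vmem u₂) (h₃ : Vmem v₁) (h₄ : Vmem v₂)
    (h : listLt u₁ v₁ ∨ (u₁ = v₁ ∧ listLt u₂ v₂)) : listLt (lexOp u₁ u₂) (lexOp v₁ v₂) := by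
  have hu : ¬ (u₁ = [T] ∧ u₂ = [T]) := by
    rintro ⟨rfl, rfl⟩
    rcases h with h | ⟨rfl, h⟩
    exacts [h₃.not_T_listLt h, h₄.not_T_listLt h]
  have hv : ¬ (v₁ = [F] ∧ v₂ = [F]) := by
    rintro ⟨rfl, rfl⟩
    rcases h with h | ⟨rfl, h⟩
    exacts [h₁.not_listLt_F h, h₂.not_listLt_F h]
  by_cases huF : u₁ = [F] ∧ u₂ = [F]
  · rw [huF.1, huF.2, lexOp_F_F]
    exact listLt_F_lexOp hv
  by_cases hvT : v₁ = [T] ∧ v₂ = [T]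
  · rw [hvT.1, hvT.2, lexOp_T_T]
    exact listLt_lexOp_T hu
  rw [lexOp_of_not huF hu, lexOp_of_not hv hvT]
  exact .cons (listLt_append_append h₁ h₃ h)

theorem lexOp_lexicographic (u₁ u₂ v₁ v₂ : List TSym)
    (h₁ : Vmem u₁) (h₂ : Vmem u₂) (h₃ : Vmem v₁) (h₄ : Vmem v₂) :
    (listLt u₁ v₁ ∨ (u₁ = v₁ ∧ listLt u₂ v₂)) ↔ listLt (lexOp u₁ u₂) (lexOp v₁ v₂) := by
  refine ⟨listLt_lexOp_of_lex h₁ h₂ h₃ h₄, fun h => ?_⟩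
  have hback := fun h' => listLt_asymm h (listLt_lexOp_of_lex h₃ h₄ h₁ h₂ h')
  rcases trichotomous_of (List.Lex symLt) u₁ v₁ with h₁₃ | rfl | h₃₁
  · exact .inl h₁₃
  · rcases trichotomous_of (List.Lex symLt) u₂ v₂ with h₂₄ | rfl | h₄₂
    · exact .inr ⟨rfl, h₂₄⟩
    · exact absurd h (listLt_irrefl _)
    · exact absurd (.inr ⟨rfl, h₄₂⟩) hback
  · exact absurd (.inl h₃₁) hback
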